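/- (Vertex isoperimetric inequality on the hypercube, two-family version) Let X be a finite set and let 𝒜, ℬ ⊆ 2^X be nonempty set systems. Then there exist a Hamming ball 𝒜₀ with center X and a Hamming ball ℬ₀ with center ∅ such that |𝒜₀| = |𝒜|, |ℬ₀| = |ℬ|, and d(𝒜₀, ℬ₀) ≥ d(𝒜, ℬ). -/

import Mathlib

/-!
Order the subsets of a linearly ordered finite set `s` simplicially: by size, then by reverse
colex. Harper's theorem says that an initial segment of this order has the smallest
neighbourhood among all families of its size. It is proved by induction on `s`: compressing
both sections of a family along a coordinate into initial segments does not enlarge the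
neighbourhood and lowers the total rank of the family, and a family all of whose sections are
initial but which is not itself initial is an initial segment with one set moved one step, which
is handled directly.

Iterating, the `t`-neighbourhood of an initial segment `ℬ₀` with `|ℬ₀| = |ℬ|` is an initial
segment no larger than the `t`-neighbourhood of `ℬ`. When `t < d(𝒜, ℬ)` the latter misses `𝒜`,
so the former lies in the first `2ⁿ - |𝒜|` sets, whose complement `𝒜₀` is therefore at distance
more than `t` from `ℬ₀`. Initial segments are Hamming balls around `∅`, and their complements are
Hamming balls around the whole ground set.
-/

open Finset

/-- Hamming distance between two finsets: size of the symmetric difference. -/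
def hdist {α : Type*} [DecidableEq α] (A B : Finset α) : ℕ :=
  ((A \ B) ∪ (B \ A)).card

/-- Hamming distance between two set systems: the minimum over pairs. -/
noncomputable def famDist {α : Type*} [DecidableEq α] (𝒜 ℬ : Finset (Finset α)) : ℕ :=
  sInf {n | ∃ A ∈ 𝒜, ∃ B ∈ ℬ, hdist A B = n}

/-- The Hamming ball of center `A` and radius `r`. -/
def hamBall {α : Type*} [DecidableEq α] [Fintype α] (A : Finset α) (r : ℕ) :
    Finset (Finset α) :=
  Finset.univ.filter fun B => hdist A B ≤ r

/-- `𝒞` is *a* Hamming ball of center `c` (of some radius `r ≥ 1`):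
`H_{r-1}(c) ⊆ 𝒞 ⊆ H_r(c)`. -/
def IsHamBall {α : Type*} [DecidableEq α] [Fintype α] (c : Finset α)
    (𝒞 : Finset (Finset α)) : Prop :=
  ∃ r : ℕ, 1 ≤ r ∧ hamBall c (r - 1) ⊆ 𝒞 ∧ 𝒞 ⊆ hamBall c r

open scoped symmDiff

section HammingDistance

variable {α : Type*} [DecidableEq α] {A B C w : Finset α} {i : α}

theorem hdist_eq_card_symmDiff (A B : Finset α) : hdist A B = #(A ∆ B) := rfl

theorem hdist_comm (A B : Finset α) : hdist A B = hdist B A := by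
  rw [hdist_eq_card_symmDiff, hdist_eq_card_symmDiff, symmDiff_comm]

@[simp] theorem hdist_self (A : Finset α) : hdist A A = 0 := by
  simp [hdist_eq_card_symmDiff]

@[simp] theorem hdist_eq_zero : hdist A B = 0 ↔ A = B := by
  rw [hdist_eq_card_symmDiff, card_eq_zero, symmDiff_eq_empty]

@[simp] theorem hdist_empty_left (B : Finset α) : hdist ∅ B = #B := by
  rw [hdist_eq_card_symmDiff, ← bot_eq_empty, bot_symmDiff]

theorem hdist_univ_left [Fintype α] (B : Finset α) : hdist univ B = Fintype.card α - #B := by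
  rw [hdist_eq_card_symmDiff, ← top_eq_univ, top_symmDiff, hnot_eq_compl, card_compl]

theorem hdist_triangle (A B C : Finset α) : hdist A C ≤ hdist A B + hdist B C :=
  (card_le_card (symmDiff_triangle A B C)).trans (card_union_le _ _)

theorem hdist_le_card (hA : A ⊆ C) (hB : B ⊆ C) : hdist A B ≤ #C :=
  card_le_card (symmDiff_subset_union.trans (union_subset hA hB))

theorem hdist_insert_left (hA : i ∉ A) (hB : i ∉ B) : hdist (insert i A) B = hdist A B + 1 := by
  have : insert i A ∆ B = insert i (A ∆ B) := by
    ext a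
    simp only [mem_symmDiff, mem_insert]
    grind
  rw [hdist_eq_card_symmDiff, this, card_insert_of_notMem (by simp [mem_symmDiff, hA, hB]),
    hdist_eq_card_symmDiff]

theorem hdist_insert_insert (hA : i ∉ A) (hB : i ∉ B) :
    hdist (insert i A) (insert i B) = hdist A B := by
  have : insert i A ∆ insert i B = A ∆ B := by
    ext a
    simp only [mem_symmDiff, mem_insert]
    grind
  rw [hdist_eq_card_symmDiff, this, hdist_eq_card_symmDiff]

theorem hdist_le_one_iff :
    hdist A w ≤ 1 ↔ A = w ∨ (∃ j ∈ w, A = w.erase j) ∨ ∃ j ∉ w, A = insert j w := by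
  rw [hdist_eq_card_symmDiff, Nat.le_one_iff_eq_zero_or_eq_one, card_eq_zero, card_eq_one,
    symmDiff_eq_empty]
  refine or_congr Iff.rfl ⟨fun ⟨j, hj⟩ => ?_, ?_⟩
  · have hA : A = w ∆ {j} := by rw [← hj, symmDiff_comm A w, symmDiff_symmDiff_cancel_left]
    by_cases hjw : j ∈ w
    · refine Or.inl ⟨j, hjw, hA.trans ?_⟩
      ext
      simp only [mem_symmDiff, mem_erase, mem_singleton]
      grind
    · refine Or.inr ⟨j, hjw, hA.trans ?_⟩
      ext
      simp only [mem_symmDiff, mem_insert, mem_singleton]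
      grind
  · rintro (⟨j, hj, rfl⟩ | ⟨j, hj, rfl⟩) <;> refine ⟨j, ?_⟩ <;> ext <;>
      simp only [mem_symmDiff, mem_erase, mem_insert, mem_singleton] <;> grind

theorem exists_hdist_le_one_of_hdist_le_succ {t : ℕ} (h : hdist A B ≤ t + 1) :
    ∃ C ⊆ A ∪ B, hdist A C ≤ t ∧ hdist C B ≤ 1 := by
  obtain rfl | hAB := eq_or_ne A B
  · exact ⟨A, subset_union_left, by simp, by simp⟩
  obtain ⟨j, hj⟩ := symmDiff_nonempty.2 hAB
  refine ⟨B ∆ {j}, ?_, ?_, ?_⟩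
  · intro x hx
    simp only [mem_symmDiff, mem_singleton, mem_union] at hx hj ⊢
    grind
  · have : A ∆ (B ∆ {j}) = (A ∆ B).erase j := by
      ext
      simp only [mem_symmDiff, mem_erase, mem_singleton] at hj ⊢
      grind
    rw [hdist_eq_card_symmDiff, this, card_erase_of_mem hj]
    rw [hdist_eq_card_symmDiff] at h; omega
  · simp [hdist_eq_card_symmDiff]

end HammingDistance

/-- Reverse colex for `α` is lex for the dual order of `α`, so up to relabelling the ground set
this is the usual simplicial order: Hamming balls around `∅`, each followed by the sets of the next
size in lex order. -/
def toSimplicial {α : Type*} [LinearOrder α] (A : Finset α) : ℕ ×ₗ (Colex (Finset α))ᵒᵈ :=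
  toLex (#A, OrderDual.toDual (toColex A))

local notation:50 A:50 " ≼ " B:50 => toSimplicial A ≤ toSimplicial B
local notation:50 A:50 " ≺ " B:50 => toSimplicial A < toSimplicial B

section SimplicialOrder

variable {α : Type*} [LinearOrder α] {A B u w z : Finset α} {i : α}

theorem toSimplicial_injective : Function.Injective (toSimplicial (α := α)) := fun _ _ h => by
  simp only [toSimplicial, toLex_inj, Prod.mk.injEq, OrderDual.toDual_inj, toColex_inj] at h
  exact h.2

theorem toSimplicial_lt_toSimplicial :
    A ≺ B ↔ #A < #B ∨ #A = #B ∧ toColex B < toColex A :=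
  Prod.Lex.toLex_lt_toLex

theorem toSimplicial_le_toSimplicial :
    A ≼ B ↔ #A < #B ∨ #A = #B ∧ toColex B ≤ toColex A :=
  Prod.Lex.toLex_le_toLex

theorem toSimplicial_lt_of_card_lt (h : #A < #B) : A ≺ B :=
  toSimplicial_lt_toSimplicial.2 (Or.inl h)

theorem card_le_of_toSimplicial_le (h : A ≼ B) : #A ≤ #B := by
  rcases toSimplicial_le_toSimplicial.1 h with h | ⟨h, -⟩ <;> omega

theorem toSimplicial_empty_le (A : Finset α) : ∅ ≼ A := by
  obtain rfl | hA := A.eq_empty_or_nonempty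
  · exact le_rfl
  · exact (toSimplicial_lt_of_card_lt (by simpa using hA)).le

theorem toSimplicial_insert_lt_insert (hA : i ∉ A) (hB : i ∉ B) :
    insert i A ≺ insert i B ↔ A ≺ B := by
  have hcolex : toColex (insert i B) < toColex (insert i A) ↔ toColex B < toColex A := by
    rw [← Colex.toColex_sdiff_lt_toColex_sdiff (u := {i}) (by simp) (by simp),
      sdiff_singleton_eq_erase, sdiff_singleton_eq_erase, erase_insert hA, erase_insert hB]
  simp only [toSimplicial_lt_toSimplicial, card_insert_of_notMem hA, card_insert_of_notMem hB,
    hcolex, Nat.add_right_cancel_iff, add_lt_add_iff_right]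

theorem toSimplicial_erase_min'_le (hw : w.Nonempty) (h : hdist u w ≤ 1) :
    w.erase (w.min' hw) ≼ u := by
  have hcard : #(w.erase (w.min' hw)) + 1 = #w := card_erase_add_one (min'_mem w hw)
  rcases hdist_le_one_iff.1 h with rfl | ⟨j, hj, rfl⟩ | ⟨j, hj, rfl⟩
  · exact (toSimplicial_lt_of_card_lt (by omega)).le
  · refine toSimplicial_le_toSimplicial.2 (Or.inr ⟨by rw [card_erase_of_mem hj]; omega, ?_⟩)
    exact (Colex.erase_le_erase hj (min'_mem w hw)).2 (min'_le w j hj)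
  · exact (toSimplicial_lt_of_card_lt (by rw [card_insert_of_notMem hj]; omega)).le

theorem toSimplicial_erase_min'_mono (hz : z.Nonempty) (hw : w.Nonempty) (h : z ≼ w) :
    z.erase (z.min' hz) ≼ w.erase (w.min' hw) := by
  have hz' := card_erase_add_one (min'_mem z hz)
  have hw' := card_erase_add_one (min'_mem w hw)
  rcases toSimplicial_le_toSimplicial.1 h with hlt | ⟨heq, hle⟩
  · exact (toSimplicial_lt_of_card_lt (by omega)).le
  · exact toSimplicial_le_toSimplicial.2 (Or.inr ⟨by omega,
      Colex.erase_le_erase_min' hle heq.ge (min'_mem w hw)⟩)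

end SimplicialOrder

section Neighbourhood

variable {α : Type*} [DecidableEq α] {s : Finset α} {t : ℕ} {i : α} {𝒜 ℬ : Finset (Finset α)}

def nbhd (s : Finset α) (t : ℕ) (𝒜 : Finset (Finset α)) : Finset (Finset α) :=
  {B ∈ s.powerset | ∃ A ∈ 𝒜, hdist A B ≤ t}

theorem mem_nbhd {B : Finset α} : B ∈ nbhd s t 𝒜 ↔ B ⊆ s ∧ ∃ A ∈ 𝒜, hdist A B ≤ t := by
  simp [nbhd]

theorem nbhd_subset_powerset : nbhd s t 𝒜 ⊆ s.powerset := filter_subset _ _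

theorem nbhd_mono (h : 𝒜 ⊆ ℬ) : nbhd s t 𝒜 ⊆ nbhd s t ℬ := fun B hB => by
  obtain ⟨hB, A, hA, hAB⟩ := mem_nbhd.1 hB
  exact mem_nbhd.2 ⟨hB, A, h hA, hAB⟩

theorem nbhd_zero (h𝒜 : 𝒜 ⊆ s.powerset) : nbhd s 0 𝒜 = 𝒜 := by
  ext B
  simp only [mem_nbhd, nonpos_iff_eq_zero, hdist_eq_zero, exists_eq_right]
  exact ⟨And.right, fun hB => ⟨mem_powerset.1 (h𝒜 hB), hB⟩⟩

theorem nbhd_succ (h𝒜 : 𝒜 ⊆ s.powerset) : nbhd s (t + 1) 𝒜 = nbhd s 1 (nbhd s t 𝒜) := by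
  ext B
  simp only [mem_nbhd]
  refine ⟨fun ⟨hB, A, hA, hAB⟩ => ⟨hB, ?_⟩, fun ⟨hB, C, ⟨_, A, hA, hAC⟩, hCB⟩ => ?_⟩
  · obtain ⟨C, hC, hAC, hCB⟩ := exists_hdist_le_one_of_hdist_le_succ hAB
    exact ⟨C, ⟨hC.trans (union_subset (mem_powerset.1 (h𝒜 hA)) hB), A, hA, hAC⟩, hCB⟩
  · exact ⟨hB, A, hA, (hdist_triangle A C B).trans (by omega)⟩

theorem disjoint_nbhd_iff (h𝒜 : 𝒜 ⊆ s.powerset) :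
    Disjoint 𝒜 (nbhd s t ℬ) ↔ ∀ A ∈ 𝒜, ∀ B ∈ ℬ, t < hdist A B := by
  simp only [disjoint_left, mem_nbhd, not_and, not_exists, not_le]
  exact forall₂_congr fun A hA => by
    simp only [mem_powerset.1 (h𝒜 hA), true_implies, hdist_comm A]

theorem nonMemberSubfamily_subset_powerset_erase (h𝒜 : 𝒜 ⊆ s.powerset) :
    𝒜.nonMemberSubfamily i ⊆ (s.erase i).powerset := fun A hA => by
  rw [mem_nonMemberSubfamily] at hA
  exact mem_powerset.2 (subset_erase.2 ⟨mem_powerset.1 (h𝒜 hA.1), hA.2⟩)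

theorem memberSubfamily_subset_powerset_erase (h𝒜 : 𝒜 ⊆ s.powerset) :
    𝒜.memberSubfamily i ⊆ (s.erase i).powerset := fun A hA => by
  rw [mem_memberSubfamily] at hA
  exact mem_powerset.2
    (subset_erase.2 ⟨(subset_insert i A).trans (mem_powerset.1 (h𝒜 hA.1)), hA.2⟩)

theorem exists_mem_iff_exists_nonMemberSubfamily_or_memberSubfamily {p : Finset α → Prop} :
    (∃ A ∈ 𝒜, p A) ↔
      (∃ A ∈ 𝒜.nonMemberSubfamily i, p A) ∨ ∃ C ∈ 𝒜.memberSubfamily i, p (insert i C) := by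
  simp only [mem_nonMemberSubfamily, mem_memberSubfamily]
  refine ⟨fun ⟨A, hA, hpA⟩ => ?_, ?_⟩
  · by_cases hiA : i ∈ A
    · exact Or.inr ⟨A.erase i, ⟨by rwa [insert_erase hiA], notMem_erase i A⟩,
        by rwa [insert_erase hiA]⟩
    · exact Or.inl ⟨A, ⟨hA, hiA⟩, hpA⟩
  · rintro (⟨A, ⟨hA, -⟩, hpA⟩ | ⟨C, ⟨hC, -⟩, hpC⟩)
    exacts [⟨A, hA, hpA⟩, ⟨_, hC, hpC⟩]

theorem sum_eq_sum_nonMemberSubfamily_add_sum_memberSubfamily (f : Finset α → ℕ) :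
    ∑ A ∈ 𝒜, f A =
      ∑ A ∈ 𝒜.nonMemberSubfamily i, f A + ∑ C ∈ 𝒜.memberSubfamily i, f (insert i C) := by
  rw [← sum_filter_not_add_sum_filter 𝒜 (i ∈ ·), ← image_insert_memberSubfamily, sum_image]
  · rfl
  · intro C hC D hD hCD
    rw [mem_coe, mem_memberSubfamily] at hC hD
    rw [← erase_insert hC.2, ← erase_insert hD.2, hCD]

theorem nonMemberSubfamily_nbhd (h𝒜 : 𝒜 ⊆ s.powerset) :
    (nbhd s 1 𝒜).nonMemberSubfamily i =
      nbhd (s.erase i) 1 (𝒜.nonMemberSubfamily i) ∪ 𝒜.memberSubfamily i := by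
  ext w
  rw [mem_nonMemberSubfamily, mem_union, mem_nbhd, mem_nbhd, subset_erase,
    exists_mem_iff_exists_nonMemberSubfamily_or_memberSubfamily (i := i)]
  constructor
  · rintro ⟨⟨hw, h | ⟨C, hC, hCw⟩⟩, hiw⟩
    · exact Or.inl ⟨⟨hw, hiw⟩, h⟩
    · rw [hdist_insert_left ((mem_memberSubfamily.1 hC).2) hiw, add_le_iff_nonpos_left,
        nonpos_iff_eq_zero, hdist_eq_zero] at hCw
      exact Or.inr (hCw ▸ hC)
  · rintro (⟨⟨hw, hiw⟩, h⟩ | hw)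
    · exact ⟨⟨hw, Or.inl h⟩, hiw⟩
    · have hiw := (mem_memberSubfamily.1 hw).2
      refine ⟨⟨?_, Or.inr ⟨w, hw, by rw [hdist_insert_left hiw hiw, hdist_self]⟩⟩, hiw⟩
      exact (subset_insert i w).trans (mem_powerset.1 (h𝒜 (mem_memberSubfamily.1 hw).1))

theorem memberSubfamily_nbhd (hi : i ∈ s) (h𝒜 : 𝒜 ⊆ s.powerset) :
    (nbhd s 1 𝒜).memberSubfamily i =
      nbhd (s.erase i) 1 (𝒜.memberSubfamily i) ∪ 𝒜.nonMemberSubfamily i := by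
  ext w
  rw [mem_memberSubfamily, mem_union, mem_nbhd, mem_nbhd, subset_erase, insert_subset_iff,
    mem_nonMemberSubfamily, exists_mem_iff_exists_nonMemberSubfamily_or_memberSubfamily (i := i)]
  constructor
  · rintro ⟨⟨⟨-, hw⟩, ⟨A, hA, hAw⟩ | ⟨C, hC, hCw⟩⟩, hiw⟩
    · rw [hdist_comm, hdist_insert_left hiw (mem_nonMemberSubfamily.1 hA).2,
        add_le_iff_nonpos_left, nonpos_iff_eq_zero, hdist_eq_zero] at hAw
      exact Or.inr (hAw ▸ mem_nonMemberSubfamily.1 hA)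
    · rw [hdist_insert_insert (mem_memberSubfamily.1 hC).2 hiw] at hCw
      exact Or.inl ⟨⟨hw, hiw⟩, C, hC, hCw⟩
  · rintro (⟨⟨hw, hiw⟩, C, hC, hCw⟩ | ⟨hw, hiw⟩)
    · rw [← hdist_insert_insert (mem_memberSubfamily.1 hC).2 hiw] at hCw
      exact ⟨⟨⟨hi, hw⟩, Or.inr ⟨C, hC, hCw⟩⟩, hiw⟩
    · have hww : hdist w (insert i w) ≤ 1 := by
        rw [hdist_comm, hdist_insert_left hiw hiw, hdist_self]
      exact ⟨⟨⟨hi, mem_powerset.1 (h𝒜 hw)⟩,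
        Or.inl ⟨w, mem_nonMemberSubfamily.2 ⟨hw, hiw⟩, hww⟩⟩, hiw⟩

theorem card_nbhd_eq (hi : i ∈ s) (h𝒜 : 𝒜 ⊆ s.powerset) :
    #(nbhd s 1 𝒜) =
      #(nbhd (s.erase i) 1 (𝒜.memberSubfamily i) ∪ 𝒜.nonMemberSubfamily i) +
        #(nbhd (s.erase i) 1 (𝒜.nonMemberSubfamily i) ∪ 𝒜.memberSubfamily i) := by
  rw [← memberSubfamily_nbhd hi h𝒜, ← nonMemberSubfamily_nbhd h𝒜,
    card_memberSubfamily_add_card_nonMemberSubfamily]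

end Neighbourhood

section InitialFamilies

variable {α : Type*} [LinearOrder α] {s : Finset α} {𝒜 ℬ 𝒞 𝒟 : Finset (Finset α)}

def IsInitial (s : Finset α) (𝒞 : Finset (Finset α)) : Prop :=
  𝒞 ⊆ s.powerset ∧ ∀ ⦃A B⦄, A ⊆ s → B ∈ 𝒞 → A ≼ B → A ∈ 𝒞

def initialSegment (s x : Finset α) : Finset (Finset α) := {z ∈ s.powerset | z ≼ x}

theorem mem_initialSegment {x z : Finset α} : z ∈ initialSegment s x ↔ z ⊆ s ∧ z ≼ x := by
  simp [initialSegment]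

theorem isInitial_initialSegment (s x : Finset α) : IsInitial s (initialSegment s x) :=
  ⟨filter_subset _ _, fun _ _ hA hB hAB =>
    mem_initialSegment.2 ⟨hA, hAB.trans (mem_initialSegment.1 hB).2⟩⟩

theorem card_initialSegment_lt {A B : Finset α} (hB : B ⊆ s) (h : A ≺ B) :
    #(initialSegment s A) < #(initialSegment s B) := by
  refine card_lt_card ((ssubset_iff_of_subset fun C hC => ?_).2 ⟨B, ?_, ?_⟩)
  · rw [mem_initialSegment] at hC ⊢
    exact ⟨hC.1, hC.2.trans h.le⟩
  · exact mem_initialSegment.2 ⟨hB, le_rfl⟩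
  · exact fun hB' => h.not_ge (mem_initialSegment.1 hB').2

theorem IsInitial.subset_of_card_le (h𝒞 : IsInitial s 𝒞) (h𝒟 : IsInitial s 𝒟)
    (hcard : #𝒞 ≤ #𝒟) : 𝒞 ⊆ 𝒟 := by
  by_contra hsub
  obtain ⟨C, hC𝒞, hC𝒟⟩ := not_subset.1 hsub
  have h𝒟𝒞 : 𝒟 ⊂ 𝒞 := by
    refine (ssubset_iff_of_subset fun D hD => h𝒞.2 (mem_powerset.1 (h𝒟.1 hD)) hC𝒞 ?_).2
      ⟨C, hC𝒞, hC𝒟⟩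
    exact le_of_not_ge fun hCD => hC𝒟 (h𝒟.2 (mem_powerset.1 (h𝒞.1 hC𝒞)) hD hCD)
  exact (card_lt_card h𝒟𝒞).not_ge hcard

theorem IsInitial.eq_of_card_eq (h𝒞 : IsInitial s 𝒞) (h𝒟 : IsInitial s 𝒟)
    (hcard : #𝒞 = #𝒟) : 𝒞 = 𝒟 :=
  (h𝒞.subset_of_card_le h𝒟 hcard.le).antisymm (h𝒟.subset_of_card_le h𝒞 hcard.ge)

theorem IsInitial.card_union_le (h𝒞 : IsInitial s 𝒞) (h𝒟 : IsInitial s 𝒟) (h𝒜 : #𝒞 ≤ #𝒜)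
    (hℬ : #𝒟 ≤ #ℬ) : #(𝒞 ∪ 𝒟) ≤ #(𝒜 ∪ ℬ) := by
  rcases le_total #𝒞 #𝒟 with h | h
  · rw [union_eq_right.2 (h𝒞.subset_of_card_le h𝒟 h)]
    exact hℬ.trans (card_le_card subset_union_right)
  · rw [union_eq_left.2 (h𝒟.subset_of_card_le h𝒞 h)]
    exact h𝒜.trans (card_le_card subset_union_left)

theorem exists_isInitial_card {m : ℕ} (hm : m ≤ 2 ^ #s) : ∃ 𝒞, IsInitial s 𝒞 ∧ #𝒞 = m := by
  induction m with
  | zero => exact ⟨∅, ⟨empty_subset _, by simp⟩, rfl⟩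
  | succ m ih =>
    obtain ⟨𝒞, h𝒞, rfl⟩ := ih (by omega)
    have hrest : (s.powerset \ 𝒞).Nonempty := by
      rw [← card_pos, card_sdiff_of_subset h𝒞.1, card_powerset]
      omega
    obtain ⟨A, hA, hAmin⟩ := exists_min_image _ toSimplicial hrest
    rw [mem_sdiff] at hA
    refine ⟨insert A 𝒞, ⟨insert_subset hA.1 h𝒞.1, fun z B hz hB hzB => ?_⟩,
      card_insert_of_notMem hA.2⟩
    rw [mem_insert] at hB ⊢
    by_contra! hz'
    rcases hB with rfl | hB
    · exact hz'.1 (toSimplicial_injective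
        (hzB.antisymm (hAmin z (mem_sdiff.2 ⟨mem_powerset.2 hz, hz'.2⟩))))
    · exact hz'.2 (h𝒞.2 hz hB hzB)

theorem isInitial_nbhd_one (h𝒞 : IsInitial s 𝒞) : IsInitial s (nbhd s 1 𝒞) := by
  refine ⟨nbhd_subset_powerset, fun z w hz hw hzw => mem_nbhd.2 ⟨hz, ?_⟩⟩
  obtain ⟨-, u, hu, huw⟩ := mem_nbhd.1 hw
  obtain rfl | hzne := z.eq_empty_or_nonempty
  · exact ⟨∅, h𝒞.2 (empty_subset _) hu (toSimplicial_empty_le u), by simp⟩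
  have hwne : w.Nonempty :=
    card_pos.1 ((card_pos.2 hzne).trans_le (card_le_of_toSimplicial_le hzw))
  refine ⟨z.erase (z.min' hzne), h𝒞.2 ((erase_subset _ _).trans hz) hu ?_,
    hdist_le_one_iff.2 (Or.inr (Or.inl ⟨_, min'_mem z hzne, rfl⟩))⟩
  exact (toSimplicial_erase_min'_mono hzne hwne hzw).trans (toSimplicial_erase_min'_le hwne huw)

theorem isInitial_nbhd (h𝒞 : IsInitial s 𝒞) (t : ℕ) : IsInitial s (nbhd s t 𝒞) := by
  induction t with
  | zero => rwa [nbhd_zero h𝒞.1]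
  | succ t ih => rw [nbhd_succ h𝒞.1]; exact isInitial_nbhd_one ih

end InitialFamilies

theorem Finset.sum_lt_sum_of_card_eq_of_forall_lt {ι : Type*} {P Q : Finset ι} {f : ι → ℕ}
    (hcard : #P = #Q) (hP : P.Nonempty) (h : ∀ p ∈ P, ∀ q ∈ Q, f p < f q) :
    ∑ p ∈ P, f p < ∑ q ∈ Q, f q := by
  obtain ⟨p₀, hp₀, hmax⟩ := exists_max_image P f hP
  calc ∑ p ∈ P, f p ≤ #P * f p₀ := by simpa using sum_le_card_nsmul P f (f p₀) hmax
    _ < #P * (f p₀ + 1) := Nat.mul_lt_mul_of_pos_left (by omega) (card_pos.2 hP)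
    _ ≤ ∑ q ∈ Q, f q := by
      simpa [hcard] using card_nsmul_le_sum Q f (f p₀ + 1) fun q hq => h p₀ hp₀ q hq

section Compression

variable {α : Type*} [LinearOrder α] {s : Finset α} {i : α} {𝒜 ℬ 𝒞 : Finset (Finset α)}

theorem IsInitial.sum_lt_sum (h𝒞 : IsInitial s 𝒞) (h𝒜 : 𝒜 ⊆ s.powerset) (hcard : #𝒞 = #𝒜)
    (hne : 𝒞 ≠ 𝒜) {f : Finset α → ℕ} (hf : ∀ A ⊆ s, ∀ B ⊆ s, A ≺ B → f A < f B) :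
    ∑ C ∈ 𝒞, f C < ∑ A ∈ 𝒜, f A := by
  rw [← sum_inter_add_sum_sdiff 𝒞 𝒜, ← sum_inter_add_sum_sdiff 𝒜 𝒞, inter_comm]
  refine Nat.add_lt_add_left (sum_lt_sum_of_card_eq_of_forall_lt (card_sdiff_comm hcard) ?_ ?_) _
  · refine nonempty_iff_ne_empty.2 fun h => hne ?_
    exact eq_of_subset_of_card_le (sdiff_eq_empty_iff_subset.1 h) hcard.ge
  · simp only [mem_sdiff]
    rintro C ⟨hC, -⟩ A ⟨hA, hA𝒞⟩
    have hAs := mem_powerset.1 (h𝒜 hA)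
    exact hf C (mem_powerset.1 (h𝒞.1 hC)) A hAs
      (lt_of_not_ge fun hAC => hA𝒞 (h𝒞.2 hAs hC hAC))

theorem IsInitial.sum_le_sum (h𝒞 : IsInitial s 𝒞) (h𝒜 : 𝒜 ⊆ s.powerset) (hcard : #𝒞 = #𝒜)
    {f : Finset α → ℕ} (hf : ∀ A ⊆ s, ∀ B ⊆ s, A ≺ B → f A < f B) :
    ∑ C ∈ 𝒞, f C ≤ ∑ A ∈ 𝒜, f A := by
  obtain rfl | hne := eq_or_ne 𝒞 𝒜
  exacts [le_rfl, (h𝒞.sum_lt_sum h𝒜 hcard hne hf).le]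

theorem sections_union_image_insert {𝒞₀ 𝒞₁ : Finset (Finset α)} (h₀ : ∀ C ∈ 𝒞₀, i ∉ C)
    (h₁ : ∀ C ∈ 𝒞₁, i ∉ C) :
    (𝒞₀ ∪ 𝒞₁.image (insert i)).nonMemberSubfamily i = 𝒞₀ ∧
      (𝒞₀ ∪ 𝒞₁.image (insert i)).memberSubfamily i = 𝒞₁ := by
  rw [nonMemberSubfamily_union, memberSubfamily_union, nonMemberSubfamily_image_insert,
    memberSubfamily_image_insert h₁, union_empty]
  constructor
  · exact filter_true_of_mem h₀
  · rw [union_eq_right]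
    intro C hC
    exact absurd (h₀ _ (mem_memberSubfamily.1 hC).1) (not_not.2 (mem_insert_self i C))

theorem sum_card_initialSegment_lt_of_sections (hi : i ∈ s) (h𝒜 : 𝒜 ⊆ s.powerset)
    (hℬ₀ : IsInitial (s.erase i) (ℬ.nonMemberSubfamily i))
    (hℬ₁ : IsInitial (s.erase i) (ℬ.memberSubfamily i))
    (hcard₀ : #(ℬ.nonMemberSubfamily i) = #(𝒜.nonMemberSubfamily i))
    (hcard₁ : #(ℬ.memberSubfamily i) = #(𝒜.memberSubfamily i))
    (hnot : ¬ (IsInitial (s.erase i) (𝒜.nonMemberSubfamily i) ∧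
      IsInitial (s.erase i) (𝒜.memberSubfamily i))) :
    ∑ B ∈ ℬ, #(initialSegment s B) < ∑ A ∈ 𝒜, #(initialSegment s A) := by
  have h𝒜₀ := nonMemberSubfamily_subset_powerset_erase (i := i) h𝒜
  have h𝒜₁ := memberSubfamily_subset_powerset_erase (i := i) h𝒜
  have hrank₀ : ∀ A ⊆ s.erase i, ∀ B ⊆ s.erase i, A ≺ B →
      #(initialSegment s A) < #(initialSegment s B) := fun A _ B hB h =>
    card_initialSegment_lt (hB.trans (erase_subset i s)) h
  have hrank₁ : ∀ A ⊆ s.erase i, ∀ B ⊆ s.erase i, A ≺ B →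
      #(initialSegment s (insert i A)) < #(initialSegment s (insert i B)) := fun A hA B hB h =>
    card_initialSegment_lt (insert_subset hi (hB.trans (erase_subset i s)))
      ((toSimplicial_insert_lt_insert (subset_erase.1 hA).2 (subset_erase.1 hB).2).2 h)
  rw [sum_eq_sum_nonMemberSubfamily_add_sum_memberSubfamily (i := i),
    sum_eq_sum_nonMemberSubfamily_add_sum_memberSubfamily (𝒜 := 𝒜) (i := i)]
  by_cases h₀ : ℬ.nonMemberSubfamily i = 𝒜.nonMemberSubfamily i
  · have h₁ : ℬ.memberSubfamily i ≠ 𝒜.memberSubfamily i := fun h₁ => hnot ⟨h₀ ▸ hℬ₀, h₁ ▸ hℬ₁⟩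
    exact Nat.add_lt_add_of_le_of_lt (hℬ₀.sum_le_sum h𝒜₀ hcard₀ hrank₀)
      (hℬ₁.sum_lt_sum h𝒜₁ hcard₁ h₁ hrank₁)
  · exact Nat.add_lt_add_of_lt_of_le (hℬ₀.sum_lt_sum h𝒜₀ hcard₀ h₀ hrank₀)
      (hℬ₁.sum_le_sum h𝒜₁ hcard₁ hrank₁)

theorem card_nbhd_le_of_sections (hi : i ∈ s) (h𝒜 : 𝒜 ⊆ s.powerset) (hℬ : ℬ ⊆ s.powerset)
    (harper : ∀ ⦃𝒞 𝒟⦄, IsInitial (s.erase i) 𝒞 → 𝒟 ⊆ (s.erase i).powerset → #𝒞 = #𝒟 →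
      #(nbhd (s.erase i) 1 𝒞) ≤ #(nbhd (s.erase i) 1 𝒟))
    (hℬ₀ : IsInitial (s.erase i) (ℬ.nonMemberSubfamily i))
    (hℬ₁ : IsInitial (s.erase i) (ℬ.memberSubfamily i))
    (hcard₀ : #(ℬ.nonMemberSubfamily i) = #(𝒜.nonMemberSubfamily i))
    (hcard₁ : #(ℬ.memberSubfamily i) = #(𝒜.memberSubfamily i)) :
    #(nbhd s 1 ℬ) ≤ #(nbhd s 1 𝒜) := by
  rw [card_nbhd_eq hi hℬ, card_nbhd_eq hi h𝒜]
  exact add_le_add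
    ((isInitial_nbhd hℬ₁ 1).card_union_le hℬ₀
      (harper hℬ₁ (memberSubfamily_subset_powerset_erase h𝒜) hcard₁) hcard₀.le)
    ((isInitial_nbhd hℬ₀ 1).card_union_le hℬ₁
      (harper hℬ₀ (nonMemberSubfamily_subset_powerset_erase h𝒜) hcard₀) hcard₁.le)

/-- The witness replaces both `i`-sections of `𝒜` by initial families of the same sizes. -/
theorem exists_compression (hi : i ∈ s) (h𝒜 : 𝒜 ⊆ s.powerset)
    (harper : ∀ ⦃𝒞 𝒟⦄, IsInitial (s.erase i) 𝒞 → 𝒟 ⊆ (s.erase i).powerset → #𝒞 = #𝒟 →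
      #(nbhd (s.erase i) 1 𝒞) ≤ #(nbhd (s.erase i) 1 𝒟))
    (hnot : ¬ (IsInitial (s.erase i) (𝒜.nonMemberSubfamily i) ∧
      IsInitial (s.erase i) (𝒜.memberSubfamily i))) :
    ∃ ℬ ⊆ s.powerset, #ℬ = #𝒜 ∧ #(nbhd s 1 ℬ) ≤ #(nbhd s 1 𝒜) ∧
      ∑ B ∈ ℬ, #(initialSegment s B) < ∑ A ∈ 𝒜, #(initialSegment s A) := by
  obtain ⟨𝒞₀, h𝒞₀, h𝒞₀card⟩ := exists_isInitial_card ((card_le_card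
    (nonMemberSubfamily_subset_powerset_erase (i := i) h𝒜)).trans (card_powerset _).le)
  obtain ⟨𝒞₁, h𝒞₁, h𝒞₁card⟩ := exists_isInitial_card ((card_le_card
    (memberSubfamily_subset_powerset_erase (i := i) h𝒜)).trans (card_powerset _).le)
  have hi₀ : ∀ C ∈ 𝒞₀, i ∉ C := fun C hC => (subset_erase.1 (mem_powerset.1 (h𝒞₀.1 hC))).2
  have hi₁ : ∀ C ∈ 𝒞₁, i ∉ C := fun C hC => (subset_erase.1 (mem_powerset.1 (h𝒞₁.1 hC))).2
  obtain ⟨hℬ₀, hℬ₁⟩ := sections_union_image_insert hi₀ hi₁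
  have hℬ : 𝒞₀ ∪ 𝒞₁.image (insert i) ⊆ s.powerset := by
    refine union_subset (h𝒞₀.1.trans (powerset_mono.2 (erase_subset i s))) ?_
    simp only [subset_iff, mem_image, mem_powerset]
    rintro _ ⟨C, hC, rfl⟩
    exact insert_subset hi ((mem_powerset.1 (h𝒞₁.1 hC)).trans (erase_subset i s))
  rw [← hℬ₀] at h𝒞₀ h𝒞₀card
  rw [← hℬ₁] at h𝒞₁ h𝒞₁card
  refine ⟨_, hℬ, ?_, card_nbhd_le_of_sections hi h𝒜 hℬ harper h𝒞₀ h𝒞₁ h𝒞₀card h𝒞₁card,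
    sum_card_initialSegment_lt_of_sections hi h𝒜 h𝒞₀ h𝒞₁ h𝒞₀card h𝒞₁card hnot⟩
  rw [← card_memberSubfamily_add_card_nonMemberSubfamily i,
    ← card_memberSubfamily_add_card_nonMemberSubfamily i 𝒜, h𝒞₀card, h𝒞₁card]

end Compression

section Exceptional

variable {α : Type*} [LinearOrder α] {s x w : Finset α} {𝒜 : Finset (Finset α)}

theorem min'_mem_of_consecutive (hs : s.Nonempty) (hs₃ : 3 ≤ #s) (hx : x ⊆ s)
    (hxy : x ≺ s \ x) (hcons : ∀ z ⊆ s, x ≺ z → ¬ z ≺ s \ x) : s.min' hs ∈ x := by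
  by_contra hμx
  set μ := s.min' hs
  obtain rfl | hxne := x.eq_empty_or_nonempty
  · refine hcons {μ} (singleton_subset_iff.2 (min'_mem s hs)) ?_ ?_ <;>
      exact toSimplicial_lt_of_card_lt (by simp <;> omega)
  set a := x.min' hxne
  have ha : a ∈ x := min'_mem x hxne
  have hμa : μ < a := (min'_le s a (hx ha)).lt_of_ne (ne_of_mem_of_not_mem ha hμx).symm
  have hμ : μ ∉ x.erase a := fun h => hμx (mem_of_mem_erase h)
  set z := insert μ (x.erase a)
  have hzs : z ⊆ s := insert_subset (min'_mem s hs) ((erase_subset a x).trans hx)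
  have hzcard : #z = #x := by rw [card_insert_of_notMem hμ, card_erase_add_one ha]
  have hxz : x ≺ z := by
    refine toSimplicial_lt_toSimplicial.2 (Or.inr ⟨hzcard.symm, ?_⟩)
    conv_rhs => rw [← insert_erase ha]
    exact (Colex.insert_lt_insert hμ (notMem_erase a x)).2 hμa
  refine hcons z hzs hxz (toSimplicial_lt_toSimplicial.2 ?_)
  have hcard : #(s \ x) + #x = #s := card_sdiff_add_card_eq_card hx
  rcases toSimplicial_lt_toSimplicial.1 hxy with hlt | ⟨heq, hcolex⟩
  · exact Or.inl (hzcard ▸ hlt)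
  refine Or.inr ⟨hzcard.trans heq, ?_⟩
  -- `x` beats its complement in reverse colex, so it contains the maximum `M` of `s`
  obtain ⟨c, hcx, -, hc⟩ := Colex.toColex_lt_toColex_iff_exists_forall_lt.1 hcolex
  set M := s.max' hs
  have hMx : M ∈ x := by
    by_contra hMx
    exact (hc M (mem_sdiff.2 ⟨max'_mem s hs, hMx⟩) hMx).not_ge (le_max' s c (hx hcx))
  have haM : a < M :=
    (min'_lt_max'_of_card x (by omega)).trans_le (le_max' s _ (hx (max'_mem x hxne)))
  refine Colex.toColex_lt_toColex_iff_exists_forall_lt.2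
    ⟨M, mem_insert_of_mem (mem_erase.2 ⟨haM.ne', hMx⟩), fun h => (mem_sdiff.1 h).2 hMx,
      fun b hb _ => (le_max' s b (mem_sdiff.1 hb).1).lt_of_ne fun h => (mem_sdiff.1 hb).2 ?_⟩
  rwa [h]

theorem exists_hdist_le_one_of_consecutive_of_card_le_two (hs₂ : #s ≤ 2) (hx : x ⊆ s)
    (hxy : x ≺ s \ x) (hcons : ∀ z ⊆ s, x ≺ z → ¬ z ≺ s \ x) (hw : w ⊆ s) :
    ∃ v ⊆ s, (v ≺ x ∨ v = s \ x) ∧ hdist v w ≤ 1 := by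
  by_cases hs₁ : #s ≤ 1
  · exact ⟨s \ x, sdiff_subset, Or.inr rfl, (hdist_le_card sdiff_subset hw).trans hs₁⟩
  have hcard : #(s \ x) + #x = #s := card_sdiff_add_card_eq_card hx
  have hxy' : #x ≤ #(s \ x) := card_le_of_toSimplicial_le hxy.le
  have hx₁ : #x = 1 := by
    refine le_antisymm (by omega) (Nat.one_le_iff_ne_zero.2 fun hx₀ => ?_)
    obtain ⟨a, ha⟩ : s.Nonempty := card_pos.1 (by omega)
    rw [card_eq_zero.1 hx₀, sdiff_empty] at hcons
    refine hcons {a} (singleton_subset_iff.2 ha) ?_ ?_ <;>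
      exact toSimplicial_lt_of_card_lt (by simp <;> omega)
  by_cases hw₁ : #w ≤ 1
  · exact ⟨∅, empty_subset s, Or.inl (toSimplicial_lt_of_card_lt (by simp [hx₁])),
      by simpa using hw₁⟩
  obtain rfl : w = s := eq_of_subset_of_card_le hw (by omega)
  refine ⟨w \ x, sdiff_subset, Or.inr rfl, ?_⟩
  have hsymm : (w \ x) ∆ w = x := by
    ext b
    have := @hx b
    simp only [mem_symmDiff, mem_sdiff]
    tauto
  rw [hdist_eq_card_symmDiff, hsymm, hx₁]

theorem exists_hdist_le_one_of_consecutive (hx : x ⊆ s) (hxy : x ≺ s \ x)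
    (hcons : ∀ z ⊆ s, x ≺ z → ¬ z ≺ s \ x) (hw : w ⊆ s) (hxw : hdist x w ≤ 1) :
    ∃ v ⊆ s, (v ≺ x ∨ v = s \ x) ∧ hdist v w ≤ 1 := by
  rcases le_or_gt #s 2 with hs₂ | hs₃
  · exact exists_hdist_le_one_of_consecutive_of_card_le_two hs₂ hx hxy hcons hw
  have hs : s.Nonempty := card_pos.1 (by omega)
  have hμx := min'_mem_of_consecutive hs hs₃ hx hxy hcons
  obtain rfl | hwne := w.eq_empty_or_nonempty
  · exact ⟨∅, empty_subset s, Or.inl (toSimplicial_lt_of_card_lt (card_pos.2 ⟨_, hμx⟩)),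
      by simp⟩
  refine ⟨w.erase (w.min' hwne), (erase_subset _ _).trans hw,
    Or.inl ((toSimplicial_erase_min'_le hwne hxw).lt_of_ne fun h => ?_),
    hdist_le_one_iff.2 (Or.inr (Or.inl ⟨_, min'_mem w hwne, rfl⟩))⟩
  -- otherwise `x = w.erase m` with `m = min w`, yet `m ≤ min s ∈ x`
  have hxw' : x = w.erase (w.min' hwne) := (toSimplicial_injective h).symm
  have hμw : s.min' hs ∈ w := mem_of_mem_erase (hxw' ▸ hμx)
  have hm : w.min' hwne = s.min' hs :=
    (min'_le w _ hμw).antisymm (min'_le s _ (hw (min'_mem w hwne)))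
  exact notMem_erase _ w (hxw' ▸ hm ▸ hμx)

end Exceptional

section Harper

variable {α : Type*} [LinearOrder α] {s : Finset α} {𝒜 𝒞 : Finset (Finset α)}

theorem eq_sdiff_of_forall_sections_isInitial (h𝒜 : 𝒜 ⊆ s.powerset)
    (hsec : ∀ i ∈ s, IsInitial (s.erase i) (𝒜.nonMemberSubfamily i) ∧
      IsInitial (s.erase i) (𝒜.memberSubfamily i))
    ⦃z w : Finset α⦄ (hz : z ⊆ s) (hz𝒜 : z ∉ 𝒜) (hw : w ∈ 𝒜) (hzw : z ≺ w) : w = s \ z := by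
  have hsplit : ∀ j ∈ s, (j ∈ z ↔ j ∉ w) := by
    intro j hj
    obtain ⟨h₀, h₁⟩ := hsec j hj
    refine ⟨fun hjz hjw => hz𝒜 ?_, fun hjw => by_contra fun hjz => hz𝒜 ?_⟩
    · have hlt : z.erase j ≺ w.erase j := by
        rwa [← toSimplicial_insert_lt_insert (notMem_erase j z) (notMem_erase j w),
          insert_erase hjz, insert_erase hjw]
      have hmem := h₁.2 (subset_erase.2 ⟨(erase_subset j z).trans hz, notMem_erase j z⟩)
        (mem_memberSubfamily.2 ⟨by rwa [insert_erase hjw], notMem_erase j w⟩) hlt.le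
      simpa [insert_erase hjz] using (mem_memberSubfamily.1 hmem).1
    · exact (mem_nonMemberSubfamily.1 (h₀.2 (subset_erase.2 ⟨hz, hjz⟩)
        (mem_nonMemberSubfamily.2 ⟨hw, hjw⟩) hzw.le)).1
  ext j
  rw [mem_sdiff]
  have hws := mem_powerset.1 (h𝒜 hw)
  exact ⟨fun hjw => ⟨hws hjw, fun hjz => (hsplit j (hws hjw)).1 hjz hjw⟩,
    fun ⟨hj, hjz⟩ => not_not.1 (mt (hsplit j hj).2 hjz)⟩

theorem nbhd_initialSegment_subset {x : Finset α} (hx : x ⊆ s) (hxy : x ≺ s \ x)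
    (hcons : ∀ z ⊆ s, x ≺ z → ¬ z ≺ s \ x) (hbefore : ∀ z ⊆ s, z ≺ x → z ∈ 𝒜)
    (hy𝒜 : s \ x ∈ 𝒜) : nbhd s 1 (initialSegment s x) ⊆ nbhd s 1 𝒜 := fun w hw => by
  obtain ⟨hw, u, hu, huw⟩ := mem_nbhd.1 hw
  obtain ⟨hus, hux⟩ := mem_initialSegment.1 hu
  rcases hux.lt_or_eq with hux | hux
  · exact mem_nbhd.2 ⟨hw, u, hbefore u hus hux, huw⟩
  obtain ⟨v, hv, hvx, hvw⟩ := exists_hdist_le_one_of_consecutive hx hxy hcons hw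
    (toSimplicial_injective hux ▸ huw)
  refine mem_nbhd.2 ⟨hw, v, ?_, hvw⟩
  rcases hvx with hvx | rfl
  exacts [hbefore v hv hvx, hy𝒜]

theorem card_initialSegment_eq {x y : Finset α} (hx : x ⊆ s) (hx𝒜 : x ∉ 𝒜) (hy𝒜 : y ∈ 𝒜)
    (hxy : x ≺ y) (h𝒜 : 𝒜 ⊆ s.powerset) (hbefore : ∀ z ⊆ s, z ≺ x → z ∈ 𝒜)
    (hafter : ∀ z ∈ 𝒜, x ≺ z → z = y) : #(initialSegment s x) = #𝒜 := by
  have heq : initialSegment s x = insert x (𝒜.erase y) := by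
    ext z
    simp only [mem_initialSegment, mem_insert, mem_erase]
    constructor
    · rintro ⟨hz, hzx⟩
      rcases hzx.lt_or_eq with hzx | hzx
      · exact Or.inr ⟨(hzx.trans hxy).ne ∘ congrArg _, hbefore z hz hzx⟩
      · exact Or.inl (toSimplicial_injective hzx)
    · rintro (rfl | ⟨hzy, hz⟩)
      · exact ⟨hx, le_rfl⟩
      · exact ⟨mem_powerset.1 (h𝒜 hz), le_of_not_gt fun hxz => hzy (hafter z hz hxz)⟩
  rw [heq, card_insert_of_notMem fun h => hx𝒜 (mem_of_mem_erase h), card_erase_add_one hy𝒜]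

/-- A non-initial family with all sections initial is the initial segment ending at some `y`,
minus the set `x` just before `y = s \ x`; the witness is the initial segment ending at `x`. -/
theorem exists_isInitial_nbhd_subset (h𝒜 : 𝒜 ⊆ s.powerset)
    (hsec : ∀ i ∈ s, IsInitial (s.erase i) (𝒜.nonMemberSubfamily i) ∧
      IsInitial (s.erase i) (𝒜.memberSubfamily i))
    (hnot : ¬ IsInitial s 𝒜) :
    ∃ 𝒟, IsInitial s 𝒟 ∧ #𝒟 = #𝒜 ∧ nbhd s 1 𝒟 ⊆ nbhd s 1 𝒜 := by
  obtain ⟨x, y, hx, hy𝒜, hxy, hx𝒜⟩ : ∃ x y, x ⊆ s ∧ y ∈ 𝒜 ∧ x ≼ y ∧ x ∉ 𝒜 := by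
    simpa [IsInitial, h𝒜] using hnot
  replace hxy : x ≺ y := hxy.lt_of_ne fun h => hx𝒜 (toSimplicial_injective h ▸ hy𝒜)
  have key := eq_sdiff_of_forall_sections_isInitial h𝒜 hsec
  have hy : y = s \ x := key hx hx𝒜 hy𝒜 hxy
  have eq_of_sdiff : ∀ {z}, z ⊆ s → s \ z = y → z = x := fun hz h => by
    rw [← Finset.sdiff_sdiff_eq_self hz, h, hy, Finset.sdiff_sdiff_eq_self hx]
  have hbefore : ∀ z ⊆ s, z ≺ x → z ∈ 𝒜 := fun z hz hzx => by_contra fun hz𝒜 =>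
    hzx.ne (congrArg _ (eq_of_sdiff hz (key hz hz𝒜 hy𝒜 (hzx.trans hxy)).symm))
  have hafter : ∀ z ∈ 𝒜, x ≺ z → z = y := fun z hz hxz => (key hx hx𝒜 hz hxz).trans hy.symm
  have hcons : ∀ z ⊆ s, x ≺ z → ¬ z ≺ s \ x := fun z hz hxz hzy => by
    by_cases hz𝒜 : z ∈ 𝒜
    · exact hzy.ne (congrArg _ ((hafter z hz𝒜 hxz).trans hy))
    · exact hxz.ne (congrArg _ (eq_of_sdiff hz (key hz hz𝒜 hy𝒜 (hy ▸ hzy)).symm).symm)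
  refine ⟨initialSegment s x, isInitial_initialSegment s x,
    card_initialSegment_eq hx hx𝒜 hy𝒜 hxy h𝒜 hbefore hafter,
    nbhd_initialSegment_subset hx (hy ▸ hxy) hcons hbefore (hy ▸ hy𝒜)⟩

/-- Harper's vertex-isoperimetric theorem. -/
theorem IsInitial.card_nbhd_one_le_of_card_eq (h𝒞 : IsInitial s 𝒞) (h𝒜 : 𝒜 ⊆ s.powerset)
    (hcard : #𝒞 = #𝒜) : #(nbhd s 1 𝒞) ≤ #(nbhd s 1 𝒜) := by
  induction s using Finset.strongInduction generalizing 𝒞 𝒜 with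
  | H s ihs =>
  induction hp : ∑ A ∈ 𝒜, #(initialSegment s A) using Nat.strong_induction_on generalizing 𝒜 with
  | _ p ihp =>
  by_cases h𝒜init : IsInitial s 𝒜
  · rw [h𝒞.eq_of_card_eq h𝒜init hcard]
  by_cases hsec : ∀ i ∈ s, IsInitial (s.erase i) (𝒜.nonMemberSubfamily i) ∧
      IsInitial (s.erase i) (𝒜.memberSubfamily i)
  · obtain ⟨𝒟, h𝒟, h𝒟card, h𝒟nbhd⟩ := exists_isInitial_nbhd_subset h𝒜 hsec h𝒜init
    rw [h𝒞.eq_of_card_eq h𝒟 (hcard.trans h𝒟card.symm)]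
    exact card_le_card h𝒟nbhd
  obtain ⟨i, hi, hnot⟩ := not_forall₂.1 hsec
  obtain ⟨ℬ, hℬ, hℬcard, hℬnbhd, hℬrank⟩ := exists_compression hi h𝒜
    (fun _ _ h𝒞' hℬ' hcard' => ihs _ (erase_ssubset hi) h𝒞' hℬ' hcard') hnot
  exact (ihp _ (hp ▸ hℬrank) hℬ (hcard.trans hℬcard.symm) rfl).trans hℬnbhd

theorem IsInitial.card_nbhd_le (h𝒞 : IsInitial s 𝒞) (h𝒜 : 𝒜 ⊆ s.powerset) (hcard : #𝒞 ≤ #𝒜)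
    (t : ℕ) : #(nbhd s t 𝒞) ≤ #(nbhd s t 𝒜) := by
  induction t generalizing 𝒞 𝒜 with
  | zero => rwa [nbhd_zero h𝒞.1, nbhd_zero h𝒜]
  | succ t ih =>
    obtain ⟨𝒟, h𝒟, h𝒟card⟩ := exists_isInitial_card (s := s) (m := #(nbhd s t 𝒜))
      ((card_le_card nbhd_subset_powerset).trans (card_powerset s).le)
    rw [nbhd_succ h𝒞.1, nbhd_succ h𝒜]
    calc #(nbhd s 1 (nbhd s t 𝒞))
        ≤ #(nbhd s 1 𝒟) :=
          card_le_card (nbhd_mono ((isInitial_nbhd h𝒞 t).subset_of_card_le h𝒟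
            (h𝒟card ▸ ih h𝒞 h𝒜 hcard)))
      _ ≤ #(nbhd s 1 (nbhd s t 𝒜)) :=
          h𝒟.card_nbhd_one_le_of_card_eq nbhd_subset_powerset h𝒟card

end Harper

section FamilyDistance

variable {α : Type*} [DecidableEq α] {𝒜 ℬ : Finset (Finset α)}

theorem lt_famDist_iff (h𝒜 : 𝒜.Nonempty) (hℬ : ℬ.Nonempty) {t : ℕ} :
    t < famDist 𝒜 ℬ ↔ ∀ A ∈ 𝒜, ∀ B ∈ ℬ, t < hdist A B := by
  refine ⟨fun h A hA B hB => h.trans_le (Nat.sInf_le ⟨A, hA, B, hB, rfl⟩), fun h => ?_⟩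
  obtain ⟨A, hA⟩ := h𝒜
  obtain ⟨B, hB⟩ := hℬ
  have hmem : famDist 𝒜 ℬ ∈ {n | ∃ A ∈ 𝒜, ∃ B ∈ ℬ, hdist A B = n} :=
    Nat.sInf_mem ⟨_, A, hA, B, hB, rfl⟩
  obtain ⟨A', hA', B', hB', hAB'⟩ := hmem
  exact hAB' ▸ h A' hA' B' hB'

theorem isHamBall_of_forall_hdist_lt [Fintype α] {c : Finset α} {𝒞 : Finset (Finset α)}
    (h𝒞 : 𝒞.Nonempty) (hclosed : ∀ C ∈ 𝒞, ∀ D, hdist c D < hdist c C → D ∈ 𝒞) :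
    IsHamBall c 𝒞 := by
  obtain ⟨C, hC, hmax⟩ := exists_max_image 𝒞 (hdist c) h𝒞
  refine ⟨max (hdist c C) 1, le_max_right _ _, fun D hD => ?_, fun D hD => ?_⟩
  · rw [hamBall, mem_filter] at hD
    obtain hlt | hle := lt_or_ge (hdist c D) (hdist c C)
    · exact hclosed C hC D hlt
    · obtain ⟨hD₀, hC₀⟩ : hdist c D = 0 ∧ hdist c C = 0 := by omega
      rwa [← hdist_eq_zero.1 hD₀, hdist_eq_zero.1 hC₀]
  · exact mem_filter.2 ⟨mem_univ D, (hmax D hD).trans (le_max_left _ _)⟩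

end FamilyDistance

section Balls

variable {α : Type*} [LinearOrder α] [Fintype α] {𝒞 : Finset (Finset α)}

theorem IsInitial.isHamBall_empty (h𝒞 : IsInitial univ 𝒞) (hne : 𝒞.Nonempty) :
    IsHamBall ∅ 𝒞 :=
  isHamBall_of_forall_hdist_lt hne fun _ hC D hD =>
    h𝒞.2 (subset_univ D) hC (toSimplicial_lt_of_card_lt (by simpa using hD)).le

theorem IsInitial.isHamBall_univ_compl (h𝒞 : IsInitial univ 𝒞)
    (hne : (univ.powerset \ 𝒞).Nonempty) : IsHamBall univ (univ.powerset \ 𝒞) :=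
  isHamBall_of_forall_hdist_lt hne fun C hC D hD => by
    rw [mem_sdiff] at hC ⊢
    refine ⟨mem_powerset.2 (subset_univ D), fun hD𝒞 => hC.2 (h𝒞.2 (subset_univ C) hD𝒞
      (toSimplicial_lt_of_card_lt ?_).le)⟩
    rw [hdist_univ_left, hdist_univ_left] at hD
    have := card_le_univ C
    omega

end Balls

section Distance

variable {α : Type*} [LinearOrder α] {s : Finset α} {𝒜 ℬ 𝒞 ℬ₀ : Finset (Finset α)}

/-- For `t < d(𝒜, ℬ)` the `t`-neighbourhood of `ℬ` misses `𝒜`; that of `ℬ₀` is initial and, by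
Harper's theorem, no larger, so it lies in `𝒞`. -/
theorem famDist_le_famDist_compl (h𝒜 : 𝒜 ⊆ s.powerset) (hℬ : ℬ ⊆ s.powerset)
    (h𝒜ne : 𝒜.Nonempty) (hℬne : ℬ.Nonempty) (h𝒞 : IsInitial s 𝒞) (h𝒞card : #𝒞 = 2 ^ #s - #𝒜)
    (hℬ₀ : IsInitial s ℬ₀) (hℬ₀card : #ℬ₀ = #ℬ) :
    famDist 𝒜 ℬ ≤ famDist (s.powerset \ 𝒞) ℬ₀ := by
  have h𝒜card : #𝒜 ≤ 2 ^ #s := (card_le_card h𝒜).trans (card_powerset s).le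
  have h𝒜₀ne : (s.powerset \ 𝒞).Nonempty := by
    rw [← card_pos, card_sdiff_of_subset h𝒞.1, card_powerset, h𝒞card]
    have := card_pos.2 h𝒜ne
    omega
  refine le_of_forall_lt fun t ht => ?_
  rw [lt_famDist_iff h𝒜ne hℬne, ← disjoint_nbhd_iff h𝒜] at ht
  rw [lt_famDist_iff h𝒜₀ne (card_pos.1 (hℬ₀card ▸ card_pos.2 hℬne)),
    ← disjoint_nbhd_iff sdiff_subset]
  have hcard : #(nbhd s t ℬ₀) ≤ #𝒞 := by
    have hunion := card_le_card (union_subset h𝒜 (nbhd_subset_powerset (s := s) (t := t) (𝒜 := ℬ)))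
    rw [card_union_of_disjoint ht, card_powerset] at hunion
    have := hℬ₀.card_nbhd_le hℬ hℬ₀card.le t
    omega
  exact disjoint_sdiff_self_left.mono_right ((isInitial_nbhd hℬ₀ t).subset_of_card_le h𝒞 hcard)

end Distance

/-- Vertex isoperimetric inequality on the hypercube, two-family version: any two nonempty
set systems can be replaced by Hamming balls centered at `X` and `∅` respectively, of the
same sizes, whose distance is at least as large. -/
theorem hamming_compression {α : Type*} [DecidableEq α] [Fintype α]
    (𝒜 ℬ : Finset (Finset α)) (h𝒜 : 𝒜.Nonempty) (hℬ : ℬ.Nonempty) :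
    ∃ 𝒜₀ ℬ₀ : Finset (Finset α),
      IsHamBall Finset.univ 𝒜₀ ∧ IsHamBall ∅ ℬ₀ ∧
        𝒜₀.card = 𝒜.card ∧ ℬ₀.card = ℬ.card ∧ famDist 𝒜 ℬ ≤ famDist 𝒜₀ ℬ₀ := by
  have : LinearOrder α := LinearOrder.lift' _ (Fintype.equivFin α).injective
  -- so that `hdist` in the goal uses the same decidable equality as the lemmas above
  obtain rfl : ‹DecidableEq α› = LinearOrder.toDecidableEq := Subsingleton.elim _ _
  have hsub : ∀ 𝒳 : Finset (Finset α), 𝒳 ⊆ univ.powerset := fun 𝒳 => by simp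
  have hcard : ∀ 𝒳 : Finset (Finset α), #𝒳 ≤ 2 ^ #(univ : Finset α) := fun 𝒳 =>
    (card_le_card (hsub 𝒳)).trans (card_powerset _).le
  obtain ⟨𝒞, h𝒞, h𝒞card⟩ := exists_isInitial_card (s := (univ : Finset α)) (Nat.sub_le _ #𝒜)
  obtain ⟨ℬ₀, hℬ₀, hℬ₀card⟩ := exists_isInitial_card (s := univ) (hcard ℬ)
  have h𝒜₀card : #(univ.powerset \ 𝒞) = #𝒜 := by
    rw [card_sdiff_of_subset h𝒞.1, card_powerset, h𝒞card, Nat.sub_sub_self (hcard 𝒜)]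
  refine ⟨univ.powerset \ 𝒞, ℬ₀, h𝒞.isHamBall_univ_compl (card_pos.1 (h𝒜₀card ▸ card_pos.2 h𝒜)),
    hℬ₀.isHamBall_empty (card_pos.1 (hℬ₀card ▸ card_pos.2 hℬ)), h𝒜₀card, hℬ₀card,
    famDist_le_famDist_compl (hsub 𝒜) (hsub ℬ) h𝒜 hℬ h𝒞 h𝒞card hℬ₀ hℬ₀card⟩
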